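/- Fix an integer k ≥ 5 and let 𝒜 be the subalgebra of ℂ[y,z] generated by g_2 = y² − 2kz, g_3 = y³ − 3kyz, g_4 = z², g_5 = yz². Then for every weight n ≥ 2 (where wt y = 1, wt z = 2), the weight-n component 𝒜_{(n)} has dimension ⌊n/2⌋, with basis {y^n − n·k·y^{n−2}z} ∪ {y^{n−2j} z^j : 2 ≤ j ≤ ⌊n/2⌋}; moreover 𝒜_{(0)} = ℂ, 𝒜_{(1)} = 0, and ℂ[y,z]_{(n)} = ℂ·y^n ⊕ 𝒜_{(n)} for n ≥ 1. -/

import Mathlib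

open MvPolynomial

noncomputable def g2 (k : ℂ) : MvPolynomial (Fin 2) ℂ := X 0 ^ 2 - C (2 * k) * X 1
noncomputable def g3 (k : ℂ) : MvPolynomial (Fin 2) ℂ := X 0 ^ 3 - C (3 * k) * X 0 * X 1
noncomputable def g4 : MvPolynomial (Fin 2) ℂ := X 1 ^ 2
noncomputable def g5 : MvPolynomial (Fin 2) ℂ := X 0 * X 1 ^ 2

/-- The subalgebra `𝒜` generated by `g₂, g₃, g₄, g₅`, as a `ℂ`-submodule. -/
noncomputable def calA (k : ℂ) : Submodule ℂ (MvPolynomial (Fin 2) ℂ) :=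
  Subalgebra.toSubmodule (Algebra.adjoin ℂ {g2 k, g3 k, g4, g5})

/-- The weight-`n` component of `ℂ[y,z]` for the grading `wt y = 1`, `wt z = 2`. -/
noncomputable def Wt (n : ℕ) : Submodule ℂ (MvPolynomial (Fin 2) ℂ) :=
  weightedHomogeneousSubmodule ℂ (![1, 2] : Fin 2 → ℕ) n


/-!
Restricted to the line `t ↦ (1 + k t, t)`, each generator `gᵢ` has vanishing derivative at
`t = 0`; this property is preserved by sums and products, so it holds on all of `𝒜`, while `yⁿ`
(derivative `n k`) fails it. Hence `ℂ yⁿ ∩ 𝒜 = 0`. Conversely `𝒜` contains `z², z³, yz², yz³`,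
hence every `yᵃ zᵇ` with `b ≥ 2`, and `yⁿ - n k yⁿ⁻² z`, by recursions in `g₂`. Together with `yⁿ`
these span each weight space, so by the modular law they span `𝒜_(n)`.
-/

namespace Polynomial

def criticalAtZero (R : Type*) [CommRing R] : Subalgebra R R[X] where
  carrier := {f | (derivative f).eval 0 = 0}
  mul_mem' {f g} hf hg := by
    simp only [Set.mem_ofPred_eq, derivative_mul, eval_add, eval_mul] at *
    rw [hf, hg, zero_mul, mul_zero, add_zero]
  add_mem' {f g} hf hg := by
    simp only [Set.mem_ofPred_eq, derivative_add, eval_add] at *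
    rw [hf, hg, add_zero]
  algebraMap_mem' r := by simp

end Polynomial

lemma pow_mem_of_sq_mem_of_pow_three_mem {M S : Type*} [Monoid M] [SetLike S M]
    [SubmonoidClass S M] {s : S} {x : M} (h2 : x ^ 2 ∈ s) (h3 : x ^ 3 ∈ s) :
    ∀ {b : ℕ}, 2 ≤ b → x ^ b ∈ s
  | 2, _ => h2
  | 3, _ => h3
  | b + 4, _ => by
    rw [show b + 4 = b + 2 + 2 from rfl, pow_add]
    exact mul_mem (pow_mem_of_sq_mem_of_pow_three_mem h2 h3 (b := b + 2) (by omega)) h2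

lemma single_add_single_inj {a b c d : ℕ} :
    Finsupp.single (0 : Fin 2) a + Finsupp.single 1 b = Finsupp.single 0 c + Finsupp.single 1 d ↔
      a = c ∧ b = d := by
  simp [Finsupp.ext_iff, Fin.forall_fin_two]

noncomputable abbrev algA (k : ℂ) : Subalgebra ℂ (MvPolynomial (Fin 2) ℂ) :=
  Algebra.adjoin ℂ {g2 k, g3 k, g4, g5}

noncomputable def evalLine (k : ℂ) : MvPolynomial (Fin 2) ℂ →ₐ[ℂ] Polynomial ℂ :=
  aeval ![1 + Polynomial.C k * Polynomial.X, Polynomial.X]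

lemma algA_le_comap_evalLine (k : ℂ) :
    algA k ≤ (Polynomial.criticalAtZero ℂ).comap (evalLine k) := by
  refine Algebra.adjoin_le ?_
  simp only [Set.insert_subset_iff, Set.singleton_subset_iff]
  refine ⟨?_, ?_, ?_, ?_⟩ <;>
    simp [Polynomial.criticalAtZero, evalLine, g2, g3, g4, g5, Polynomial.derivative_pow]

lemma disjoint_span_X0_pow_calA {k : ℂ} (hk : k ≠ 0) {n : ℕ} (hn : n ≠ 0) :
    Disjoint (Submodule.span ℂ {(X 0 : MvPolynomial (Fin 2) ℂ) ^ n}) (calA k) := by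
  rw [Submodule.disjoint_def]
  rintro _ hx hA
  obtain ⟨c, rfl⟩ := Submodule.mem_span_singleton.1 hx
  have hc : (Polynomial.derivative (evalLine k (c • X 0 ^ n))).eval 0 = 0 :=
    algA_le_comap_evalLine k hA
  simp_all [evalLine, Polynomial.derivative_pow]

section Membership

variable {k : ℂ}

lemma g2_mem_algA : g2 k ∈ algA k := Algebra.subset_adjoin (by simp)
lemma g3_mem_algA : g3 k ∈ algA k := Algebra.subset_adjoin (by simp)
lemma g4_mem_algA : g4 ∈ algA k := Algebra.subset_adjoin (by simp)
lemma g5_mem_algA : g5 ∈ algA k := Algebra.subset_adjoin (by simp)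

lemma X1_pow_mem_algA (hk : k ≠ 0) {b : ℕ} (hb : 2 ≤ b) : X 1 ^ b ∈ algA k := by
  refine pow_mem_of_sq_mem_of_pow_three_mem g4_mem_algA ?_ hb
  have h : (2 * k ^ 3) • (X 1 ^ 3 : MvPolynomial (Fin 2) ℂ) =
      (3 * k ^ 2) • (g2 k * g4) - g2 k ^ 3 + g3 k ^ 2 := by
    simp only [smul_eq_C_mul, g2, g3, g4, map_mul, map_pow, map_ofNat]
    ring
  rw [← inv_smul_smul₀ (by simp [hk] : 2 * k ^ 3 ≠ 0) (X 1 ^ 3), h]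
  exact Subalgebra.smul_mem _ (add_mem (sub_mem (Subalgebra.smul_mem _
    (mul_mem g2_mem_algA g4_mem_algA) _) (pow_mem g2_mem_algA 3)) (pow_mem g3_mem_algA 2)) _

lemma X0_mul_X1_pow_mem_algA (hk : k ≠ 0) {b : ℕ} (hb : 2 ≤ b) : X 0 * X 1 ^ b ∈ algA k := by
  obtain rfl | rfl | hb4 : b = 2 ∨ b = 3 ∨ 4 ≤ b := by omega
  · exact g5_mem_algA
  · have h : k • (X 0 * X 1 ^ 3 : MvPolynomial (Fin 2) ℂ) = g2 k * g5 - g3 k * g4 := by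
      simp only [smul_eq_C_mul, g2, g3, g4, g5, map_mul, map_ofNat]
      ring
    rw [← inv_smul_smul₀ hk (X 0 * X 1 ^ 3), h]
    exact Subalgebra.smul_mem _
      (sub_mem (mul_mem g2_mem_algA g5_mem_algA) (mul_mem g3_mem_algA g4_mem_algA)) _
  · have h : (X 0 * X 1 ^ b : MvPolynomial (Fin 2) ℂ) = g5 * X 1 ^ (b - 2) := by
      rw [g5, mul_assoc, ← pow_add, Nat.add_sub_cancel' (by omega)]
    rw [h]
    exact mul_mem g5_mem_algA (X1_pow_mem_algA hk (by omega))

lemma X0_pow_mul_X1_pow_mem_algA (hk : k ≠ 0) :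
    ∀ (a : ℕ) {b : ℕ}, 2 ≤ b → X 0 ^ a * X 1 ^ b ∈ algA k
  | 0, _, hb => by simpa using X1_pow_mem_algA hk hb
  | 1, _, hb => by simpa using X0_mul_X1_pow_mem_algA hk hb
  | a + 2, b, hb => by
    have h : (X 0 ^ (a + 2) * X 1 ^ b : MvPolynomial (Fin 2) ℂ) =
        g2 k * (X 0 ^ a * X 1 ^ b) + (2 * k) • (X 0 ^ a * X 1 ^ (b + 1)) := by
      simp only [smul_eq_C_mul, g2, map_mul, map_ofNat]
      ring
    rw [h]
    exact add_mem (mul_mem g2_mem_algA (X0_pow_mul_X1_pow_mem_algA hk a hb))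
      (Subalgebra.smul_mem _ (X0_pow_mul_X1_pow_mem_algA hk a (by omega)) _)

lemma X0_pow_sub_mem_algA (hk : k ≠ 0) :
    ∀ {n : ℕ}, 2 ≤ n → X 0 ^ n - C ((n : ℂ) * k) * X 0 ^ (n - 2) * X 1 ∈ algA k
  | 2, _ => by simpa [g2] using g2_mem_algA
  | 3, _ => by simpa [g3] using g3_mem_algA
  | n + 4, _ => by
    have h : (X 0 ^ (n + 4) - C (((n + 4 : ℕ) : ℂ) * k) * X 0 ^ (n + 4 - 2) * X 1 :
        MvPolynomial (Fin 2) ℂ) = g2 k * (X 0 ^ (n + 2) - C (((n + 2 : ℕ) : ℂ) * k) *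
          X 0 ^ (n + 2 - 2) * X 1) - (2 * (n + 2) * k ^ 2) • (X 0 ^ n * X 1 ^ 2) := by
      simp only [smul_eq_C_mul, g2, Nat.add_sub_cancel, show n + 4 - 2 = n + 2 by omega]
      push_cast
      simp only [map_mul, map_add, map_pow, map_ofNat, map_natCast]
      ring
    rw [h]
    exact sub_mem (mul_mem g2_mem_algA (X0_pow_sub_mem_algA hk (n := n + 2) (by omega)))
      (Subalgebra.smul_mem _ (X0_pow_mul_X1_pow_mem_algA hk n le_rfl) _)

end Membership

lemma Wt_eq_span (n : ℕ) :
    Wt n = Submodule.span ℂ {p | ∃ a b, a + 2 * b = n ∧ X 0 ^ a * X 1 ^ b = p} := by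
  rw [Wt, weightedHomogeneousSubmodule_eq_finsupp_supported]
  change restrictSupport ℂ _ = _
  rw [restrictSupport_eq_span]
  congr 1
  ext p
  simp only [Set.mem_image, Set.mem_ofPred_eq]
  constructor
  · rintro ⟨d, hd, rfl⟩
    refine ⟨d 0, d 1, ?_, by simp [monomial_fin_two]⟩
    simpa [Finsupp.weight_apply, Finsupp.sum_fintype, mul_comm] using hd
  · rintro ⟨a, b, hab, rfl⟩
    refine ⟨Finsupp.single 0 a + Finsupp.single 1 b, ?_, ?_⟩
    · simp [Finsupp.weight_single, ← hab, mul_comm]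
    · simp [monomial_fin_two]

lemma X0_pow_mul_X1_pow_mem_Wt {a b n : ℕ} (h : a + 2 * b = n) :
    (X 0 ^ a * X 1 ^ b : MvPolynomial (Fin 2) ℂ) ∈ Wt n :=
  (Wt_eq_span n).ge (Submodule.subset_span ⟨a, b, h, rfl⟩)

lemma coeff_X0_pow_mul_X1_pow (a b c d : ℕ) :
    coeff (Finsupp.single 0 c + Finsupp.single 1 d) (X 0 ^ a * X 1 ^ b : MvPolynomial (Fin 2) ℂ) =
      if a = c ∧ b = d then 1 else 0 := by
  rw [X_pow_eq_monomial, X_pow_eq_monomial, monomial_mul, one_mul, coeff_monomial]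
  simp only [single_add_single_inj]

noncomputable def calABasis (k : ℂ) (n : ℕ) (j : Fin (n / 2)) : MvPolynomial (Fin 2) ℂ :=
  if (j : ℕ) = 0 then X 0 ^ n - C ((n : ℂ) * k) * X 0 ^ (n - 2) * X 1
  else X 0 ^ (n - 2 * ((j : ℕ) + 1)) * X 1 ^ ((j : ℕ) + 1)

def calABasisExponent (n : ℕ) (j : Fin (n / 2)) : ℕ := if (j : ℕ) = 0 then 0 else j + 1

lemma calABasis_eq (k : ℂ) (n : ℕ) (j : Fin (n / 2)) : calABasis k n j =
    X 0 ^ (n - 2 * calABasisExponent n j) * X 1 ^ calABasisExponent n j -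
      (if (j : ℕ) = 0 then (n * k) • (X 0 ^ (n - 2) * X 1 ^ 1) else 0) := by
  unfold calABasis calABasisExponent
  split_ifs <;> simp [smul_eq_C_mul, mul_assoc]

lemma coeff_calABasis (k : ℂ) (n : ℕ) (i j : Fin (n / 2)) :
    coeff (Finsupp.single 0 (n - 2 * calABasisExponent n i) +
      Finsupp.single 1 (calABasisExponent n i)) (calABasis k n j) = if i = j then 1 else 0 := by
  have hi := i.2
  have hj := j.2
  rw [calABasis_eq]
  simp only [calABasisExponent, Fin.ext_iff]
  split_ifs <;> simp only [coeff_sub, coeff_smul, coeff_X0_pow_mul_X1_pow, and_true, if_true,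
    sub_zero] <;> split_ifs <;> first | omega | simp

lemma linearIndependent_calABasis (k : ℂ) (n : ℕ) : LinearIndependent ℂ (calABasis k n) := by
  rw [Fintype.linearIndependent_iff]
  intro g hg i
  have := congrArg (coeff (Finsupp.single 0 (n - 2 * calABasisExponent n i) +
      Finsupp.single 1 (calABasisExponent n i))) hg
  rw [coeff_sum] at this
  simpa only [coeff_smul, coeff_calABasis, smul_eq_mul, mul_ite, mul_one, mul_zero,
    Finset.sum_ite_eq, Finset.mem_univ, if_true, coeff_zero] using this

lemma calABasis_mem {k : ℂ} (hk : k ≠ 0) (n : ℕ) (j : Fin (n / 2)) :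
    calABasis k n j ∈ calA k ⊓ Wt n := by
  have hj := j.2
  unfold calABasis
  split_ifs with h0
  · refine ⟨X0_pow_sub_mem_algA hk (by omega), sub_mem ?_ ?_⟩
    · simpa using X0_pow_mul_X1_pow_mem_Wt (a := n) (b := 0) (by omega)
    · rw [mul_assoc, C_mul']
      exact Submodule.smul_mem _ _
        (by simpa using X0_pow_mul_X1_pow_mem_Wt (a := n - 2) (b := 1) (by omega))
  · exact ⟨X0_pow_mul_X1_pow_mem_algA hk _ (by omega), X0_pow_mul_X1_pow_mem_Wt (by omega)⟩

lemma span_X0_pow_sup_span_calABasis {k : ℂ} (hk : k ≠ 0) (n : ℕ) :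
    Submodule.span ℂ {X 0 ^ n} ⊔ Submodule.span ℂ (Set.range (calABasis k n)) = Wt n := by
  refine le_antisymm (sup_le ?_ ?_) ?_
  · simpa using X0_pow_mul_X1_pow_mem_Wt (a := n) (b := 0) (by omega)
  · exact Submodule.span_le.2 (Set.range_subset_iff.2 fun j => (calABasis_mem hk n j).2)
  rw [Wt_eq_span, Submodule.span_le]
  rintro _ ⟨a, b, hab, rfl⟩
  rcases b with _ | _ | b
  · exact Submodule.mem_sup_left (by simp [← hab, Submodule.mem_span_singleton_self])
  · have hnk : (n : ℂ) * k ≠ 0 := mul_ne_zero (by norm_cast; omega) hk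
    have h : X 0 ^ a * X 1 ^ (0 + 1) =
        ((n : ℂ) * k)⁻¹ • (X 0 ^ n - calABasis k n ⟨0, by omega⟩) := by
      rw [eq_inv_smul_iff₀ hnk, calABasis, if_pos rfl, show n - 2 = a by omega, smul_eq_C_mul]
      ring
    rw [h]
    exact Submodule.smul_mem _ _ (sub_mem
      (Submodule.mem_sup_left (Submodule.mem_span_singleton_self _))
      (Submodule.mem_sup_right (Submodule.subset_span ⟨_, rfl⟩)))
  · exact Submodule.mem_sup_right (Submodule.subset_span ⟨⟨b + 1, by omega⟩, by
      simp [calABasis, ← hab]⟩)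

lemma calA_inf_Wt_eq_span {k : ℂ} (hk : k ≠ 0) {n : ℕ} (hn : n ≠ 0) :
    calA k ⊓ Wt n = Submodule.span ℂ (Set.range (calABasis k n)) := by
  have hle : Submodule.span ℂ (Set.range (calABasis k n)) ≤ calA k ⊓ Wt n :=
    Submodule.span_le.2 (Set.range_subset_iff.2 (calABasis_mem hk n))
  calc calA k ⊓ Wt n
      = (Submodule.span ℂ (Set.range (calABasis k n)) ⊔ Submodule.span ℂ {X 0 ^ n}) ⊓
          (calA k ⊓ Wt n) := by
        rw [sup_comm, span_X0_pow_sup_span_calABasis hk, inf_of_le_right inf_le_right]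
    _ = Submodule.span ℂ (Set.range (calABasis k n)) ⊔
          Submodule.span ℂ {X 0 ^ n} ⊓ (calA k ⊓ Wt n) := sup_inf_assoc_of_le _ hle
    _ = Submodule.span ℂ (Set.range (calABasis k n)) := by
        rw [((disjoint_span_X0_pow_calA hk hn).mono_right inf_le_left).eq_bot, sup_bot_eq]

theorem stmt_5 (k : ℕ) (hk : 5 ≤ k) :
    (calA (k : ℂ) ⊓ Wt 0 = Submodule.span ℂ {(1 : MvPolynomial (Fin 2) ℂ)}) ∧
    (calA (k : ℂ) ⊓ Wt 1 = ⊥) ∧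
    (∀ n : ℕ, 2 ≤ n →
      (calA (k : ℂ) ⊓ Wt n =
        Submodule.span ℂ (Set.range fun j : Fin (n / 2) =>
          if (j : ℕ) = 0 then
            (X 0 : MvPolynomial (Fin 2) ℂ) ^ n - C ((n : ℂ) * (k : ℂ)) * X 0 ^ (n - 2) * X 1
          else X 0 ^ (n - 2 * ((j : ℕ) + 1)) * X 1 ^ ((j : ℕ) + 1))) ∧
      LinearIndependent ℂ (fun j : Fin (n / 2) =>
          if (j : ℕ) = 0 then
            (X 0 : MvPolynomial (Fin 2) ℂ) ^ n - C ((n : ℂ) * (k : ℂ)) * X 0 ^ (n - 2) * X 1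
          else X 0 ^ (n - 2 * ((j : ℕ) + 1)) * X 1 ^ ((j : ℕ) + 1)) ∧
      Module.finrank ℂ (calA (k : ℂ) ⊓ Wt n : Submodule ℂ (MvPolynomial (Fin 2) ℂ)) = n / 2) ∧
    (∀ n : ℕ, 1 ≤ n →
      Submodule.span ℂ {(X 0 : MvPolynomial (Fin 2) ℂ) ^ n} ⊔ (calA (k : ℂ) ⊓ Wt n) = Wt n ∧
      Disjoint (Submodule.span ℂ {(X 0 : MvPolynomial (Fin 2) ℂ) ^ n}) (calA (k : ℂ) ⊓ Wt n)) := by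
  have hk0 : (k : ℂ) ≠ 0 := Nat.cast_ne_zero.2 (by omega)
  refine ⟨?_, ?_, fun n hn => ⟨?_, ?_, ?_⟩, fun n hn => ⟨?_, ?_⟩⟩
  · have hWt0 : Submodule.span ℂ {1} = Wt 0 := by
      simpa using span_X0_pow_sup_span_calABasis hk0 0
    rw [← hWt0, inf_eq_right, Submodule.span_singleton_le_iff_mem]
    exact one_mem (algA k)
  · simpa using calA_inf_Wt_eq_span hk0 one_ne_zero
  · exact calA_inf_Wt_eq_span hk0 (by omega)
  · exact linearIndependent_calABasis _ n
  · rw [calA_inf_Wt_eq_span hk0 (by omega),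
      finrank_span_eq_card (linearIndependent_calABasis _ n), Fintype.card_fin]
  · rw [calA_inf_Wt_eq_span hk0 (by omega)]
    exact span_X0_pow_sup_span_calABasis hk0 n
  · exact (disjoint_span_X0_pow_calA hk0 (by omega)).mono_right inf_le_left
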